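/- Price of a degenerate digital option: fix a natural number x₀ ≤ T and let K = S0 * (1+u)^(x₀) * (1+d)^(T−x₀). Every predictable self-financing trading strategy whose terminal wealth is the digital payoff V ω = (if S T ω = K then 1 else 0) has initial wealth equal to (1+r)^(−T) * (T.choose x₀) * q^(x₀) * (1−q)^(T−x₀). (Since −1 < d < u, distinct numbers of up-moves give distinct terminal stock prices, so the event S T ω = K coincides with the event x(ω) = x₀.) -/

import Mathlib

/-!
Weight each path by `∏ᵢ (q or 1 - q)`, i.e. by its risk-neutral probability. With
`q (1 + u) + (1 - q) (1 + d) = 1 + r`, and because the holdings over period `t` are independent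
of the `t`-th move, the expected value of a predictable portfolio grows by the factor `1 + r`
over each period; self-financing lets this compound to `(1 + r) ^ T` from the constant initial
wealth to the terminal wealth. The terminal price determines the number of up-moves, so the
expected payoff is the binomial probability `C(T, x₀) q ^ x₀ (1 - q) ^ (T - x₀)`.
-/

open Finset

/-- Stock price at time `t` in the `T`-step CRR binomial model. -/
def crrStock (T : ℕ) (S0 u d : ℝ) (t : ℕ) (ω : Fin T → Bool) : ℝ :=
  S0 * ∏ i ∈ Finset.univ.filter (fun i : Fin T => (i : ℕ) < t),
    (if ω i then 1 + u else 1 + d)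

/-- A trading strategy `(a, b)` is predictable if the holdings chosen at time `t`
depend only on the first `t` coordinates of the trajectory. -/
def crrPredictable {T : ℕ} (a b : Fin T → (Fin T → Bool) → ℝ) : Prop :=
  ∀ (t : Fin T) (ω ω' : Fin T → Bool),
    (∀ i : Fin T, (i : ℕ) < (t : ℕ) → ω i = ω' i) →
      a t ω = a t ω' ∧ b t ω = b t ω'

/-- Self-financing condition for the strategy `(a, b)`. -/
def crrSelfFinancing {T : ℕ} (S0 u d r : ℝ) (a b : Fin T → (Fin T → Bool) → ℝ) : Prop :=
  ∀ (t : ℕ) (ht : t + 1 < T) (ω : Fin T → Bool),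
    a ⟨t, by omega⟩ ω * crrStock T S0 u d (t + 1) ω + b ⟨t, by omega⟩ ω * (1 + r) ^ (t + 1)
      = a ⟨t + 1, ht⟩ ω * crrStock T S0 u d (t + 1) ω + b ⟨t + 1, ht⟩ ω * (1 + r) ^ (t + 1)

/-- Initial wealth of the strategy `(a, b)`. -/
def crrInitialWealth {T : ℕ} (hT : 0 < T) (S0 : ℝ) (a b : Fin T → (Fin T → Bool) → ℝ)
    (ω : Fin T → Bool) : ℝ :=
  a ⟨0, hT⟩ ω * S0 + b ⟨0, hT⟩ ω

/-- Terminal wealth of the strategy `(a, b)`. -/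
def crrTerminalWealth {T : ℕ} (hT : 0 < T) (S0 u d r : ℝ)
    (a b : Fin T → (Fin T → Bool) → ℝ) (ω : Fin T → Bool) : ℝ :=
  a ⟨T - 1, by omega⟩ ω * crrStock T S0 u d T ω + b ⟨T - 1, by omega⟩ ω * (1 + r) ^ T

/-- Number of up-moves in the trajectory `ω`. -/
def crrUps {T : ℕ} (ω : Fin T → Bool) : ℕ :=
  (Finset.univ.filter (fun i : Fin T => ω i = true)).card

section PiExpect

variable {ι α R : Type*} [Fintype ι] [DecidableEq ι] [Fintype α] [CommSemiring R]

def piExpect (p : α → R) (f : (ι → α) → R) : R :=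
  ∑ ω, f ω * ∏ i, p (ω i)

variable {p : α → R}

lemma piExpect_add (f g : (ι → α) → R) :
    piExpect p (f + g) = piExpect p f + piExpect p g := by
  simp only [piExpect, Pi.add_apply, add_mul, sum_add_distrib]

lemma piExpect_const (hp : ∑ x, p x = 1) (c : R) : piExpect p (fun _ : ι → α => c) = c := by
  rw [piExpect, ← mul_sum, ← Fintype.prod_sum, hp, prod_const_one, mul_one]

lemma piExpect_mul_apply (hp : ∑ x, p x = 1) {g : (ι → α) → R} {j : ι}
    (hg : ∀ ω ω', (∀ i ≠ j, ω i = ω' i) → g ω = g ω') (h : α → R) :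
    piExpect p (fun ω => g ω * h (ω j)) = piExpect p g * ∑ x, h x * p x := by
  -- `e` splits off the `j`-th coordinate; `A x` is independent of `x` since `g` ignores it.
  set e := (Equiv.funSplitAt j α).symm
  have he_self (x η) : e (x, η) j = x := by simp [e, Equiv.funSplitAt, Equiv.piSplitAt]
  have he_ne (x η) (i : {i // i ≠ j}) : e (x, η) i = η i := by
    simp [e, Equiv.funSplitAt, Equiv.piSplitAt, i.2]
  set A : α → R := fun x => ∑ η, g (e (x, η)) * ∏ i : {i // i ≠ j}, p (η i)
  have hA (x y) : A x = A y := sum_congr rfl fun η _ => by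
    congr 1
    exact hg _ _ fun i hi => by rw [he_ne x η ⟨i, hi⟩, he_ne y η ⟨i, hi⟩]
  have hsum (c : α → R) :
      ∑ ω, g ω * c (ω j) * ∏ i, p (ω i) = ∑ x, c x * p x * A x := by
    rw [← e.sum_comp, Fintype.sum_prod_type]
    refine sum_congr rfl fun x _ => ?_
    simp only [A, mul_sum, Fintype.prod_eq_mul_prod_subtype_ne _ j, he_self, he_ne]
    exact sum_congr rfl fun η _ => by ring
  have hAavg (x) : A x = ∑ y, p y * A y := by simp_rw [hA _ x, ← sum_mul, hp, one_mul]
  calc piExpect p (fun ω => g ω * h (ω j))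
      = ∑ x, h x * p x * (∑ y, p y * A y) := by
        rw [piExpect, hsum]
        exact sum_congr rfl fun x _ => by rw [hAavg x]
    _ = piExpect p g * ∑ x, h x * p x := by
        rw [← sum_mul, mul_comm]
        congr 1
        simpa [A, piExpect] using (hsum 1).symm

end PiExpect

lemma pow_mul_pow_sub_injOn {K : Type*} [Field K] [LinearOrder K] [IsStrictOrderedRing K]
    {a b : K} (hb : 0 < b) (hba : b < a) (n : ℕ) :
    Set.InjOn (fun k => a ^ k * b ^ (n - k)) (Set.Iic n) := by
  have hfactor : ∀ k ≤ n, a ^ k * b ^ (n - k) = (a / b) ^ k * b ^ n := fun k hk => by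
    rw [div_pow, ← Nat.sub_add_cancel hk, pow_add b, Nat.add_sub_cancel]
    field_simp
  intro k hk l hl hkl
  simp only [hfactor k hk, hfactor l hl] at hkl
  exact pow_right_injective₀ (div_pos (hb.trans hba) hb) ((one_lt_div hb).2 hba).ne'
    (mul_right_cancel₀ (pow_ne_zero n hb.ne') hkl)

section Stock

variable {T : ℕ} (S0 u d : ℝ)

lemma crrStock_zero (ω : Fin T → Bool) : crrStock T S0 u d 0 ω = S0 := by
  simp [crrStock]

lemma crrStock_succ {t : ℕ} (ht : t < T) (ω : Fin T → Bool) :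
    crrStock T S0 u d (t + 1) ω
      = crrStock T S0 u d t ω * (if ω ⟨t, ht⟩ then 1 + u else 1 + d) := by
  have hinsert : univ.filter (fun i : Fin T => (i : ℕ) < t + 1)
      = insert ⟨t, ht⟩ (univ.filter (fun i : Fin T => (i : ℕ) < t)) := by
    ext i
    simp only [mem_filter, mem_univ, true_and, mem_insert, Fin.ext_iff]
    omega
  rw [crrStock, crrStock, hinsert, prod_insert (by simp)]
  ring

lemma crrStock_congr {t : ℕ} {ω ω' : Fin T → Bool}
    (h : ∀ i : Fin T, (i : ℕ) < t → ω i = ω' i) :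
    crrStock T S0 u d t ω = crrStock T S0 u d t ω' := by
  unfold crrStock
  congr 1
  exact prod_congr rfl fun i hi => by rw [h i (mem_filter.1 hi).2]

lemma prod_apply_eq_pow_crrUps {M : Type*} [CommMonoid M] (p : Bool → M) (ω : Fin T → Bool) :
    ∏ i, p (ω i) = p true ^ crrUps ω * p false ^ (T - crrUps ω) := by
  have hcard := card_filter_add_card_filter_not (s := univ) (fun i : Fin T => ω i = true)
  rw [card_univ, Fintype.card_fin] at hcard
  have hup (i) (hi : i ∈ univ.filter fun i => ω i = true) : p (ω i) = p true := by
    rw [(mem_filter.1 hi).2]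
  have hdown (i) (hi : i ∈ univ.filter fun i => ¬ω i = true) : p (ω i) = p false := by
    rw [show ω i = false by simpa using (mem_filter.1 hi).2]
  rw [← prod_filter_mul_prod_filter_not univ fun i => ω i = true, prod_congr rfl hup,
    prod_congr rfl hdown, prod_const, prod_const, crrUps]
  congr 2
  omega

lemma crrStock_terminal (ω : Fin T → Bool) :
    crrStock T S0 u d T ω = S0 * ((1 + u) ^ crrUps ω * (1 + d) ^ (T - crrUps ω)) := by
  rw [crrStock, filter_true_of_mem fun i _ => i.isLt,
    prod_apply_eq_pow_crrUps fun up => if up then 1 + u else 1 + d]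
  rfl

lemma crrUps_le (ω : Fin T → Bool) : crrUps ω ≤ T :=
  (card_filter_le _ _).trans_eq (card_fin T)

lemma crrStock_terminal_eq_iff (hS0 : S0 ≠ 0) (hd : -1 < d) (hdu : d < u) {k : ℕ} (hk : k ≤ T)
    (ω : Fin T → Bool) :
    crrStock T S0 u d T ω = S0 * (1 + u) ^ k * (1 + d) ^ (T - k) ↔ crrUps ω = k := by
  rw [crrStock_terminal, mul_assoc, mul_right_inj' hS0]
  exact (pow_mul_pow_sub_injOn (by linarith) (by linarith) T).eq_iff
    (Set.mem_Iic.2 (crrUps_le ω)) (Set.mem_Iic.2 hk)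

lemma card_filter_crrUps_eq (k : ℕ) :
    #(univ.filter fun ω : Fin T → Bool => crrUps ω = k) = T.choose k := by
  rw [show T.choose k = #(powersetCard k (univ : Finset (Fin T))) by simp]
  refine card_bij' (fun ω _ => univ.filter fun i => ω i = true) (fun s _ i => decide (i ∈ s))
    ?_ ?_ ?_ ?_ <;> intro x hx
  · simpa [mem_powersetCard, crrUps] using (mem_filter.1 hx).2
  · exact mem_filter.2 ⟨mem_univ _, by simpa [mem_powersetCard, crrUps] using hx⟩
  · funext i; simp
  · ext i; simp

lemma piExpect_indicator_crrUps_eq (p : Bool → ℝ) (k : ℕ) :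
    piExpect p (fun ω : Fin T → Bool => if crrUps ω = k then 1 else 0)
      = T.choose k * p true ^ k * p false ^ (T - k) := by
  simp_rw [piExpect, prod_apply_eq_pow_crrUps, ite_mul, one_mul, zero_mul, ← sum_filter]
  rw [sum_congr rfl fun ω hω => by rw [(mem_filter.1 hω).2], sum_const,
    card_filter_crrUps_eq, nsmul_eq_mul, mul_assoc]

end Stock

noncomputable def crrRiskNeutralWeight (u d r : ℝ) (up : Bool) : ℝ :=
  if up then (r - d) / (u - d) else 1 - (r - d) / (u - d)

section Trading

variable {T : ℕ} {S0 u d r : ℝ}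

lemma sum_crrRiskNeutralWeight : ∑ x, crrRiskNeutralWeight u d r x = 1 := by
  simp [crrRiskNeutralWeight]

lemma sum_growth_mul_crrRiskNeutralWeight (hud : u ≠ d) :
    ∑ x, (if x then 1 + u else 1 + d) * crrRiskNeutralWeight u d r x = 1 + r := by
  have : u - d ≠ 0 := sub_ne_zero.2 hud
  simp only [crrRiskNeutralWeight, Fintype.sum_bool, if_true, Bool.false_eq_true, if_false]
  field_simp
  ring

variable (S0 u d r)

def crrPortfolioValue (a b : Fin T → (Fin T → Bool) → ℝ) (t : Fin T) (s : ℕ)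
    (ω : Fin T → Bool) : ℝ :=
  a t ω * crrStock T S0 u d s ω + b t ω * (1 + r) ^ s

variable {S0 u d r}

lemma piExpect_crrPortfolioValue_succ (hud : u ≠ d) {a b : Fin T → (Fin T → Bool) → ℝ}
    (hpred : crrPredictable a b) (t : Fin T) :
    piExpect (crrRiskNeutralWeight u d r) (crrPortfolioValue S0 u d r a b t (t + 1))
      = (1 + r) * piExpect (crrRiskNeutralWeight u d r) (crrPortfolioValue S0 u d r a b t t) := by
  have hpast (ω ω' : Fin T → Bool) (h : ∀ i ≠ t, ω i = ω' i) :
      ∀ i : Fin T, (i : ℕ) < t → ω i = ω' i := fun i hi => h i (Fin.ne_of_lt hi)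
  set g := fun ω => a t ω * crrStock T S0 u d t ω
  set k := fun ω => b t ω * (1 + r) ^ (t : ℕ)
  have hg : ∀ ω ω', (∀ i ≠ t, ω i = ω' i) → g ω = g ω' := fun ω ω' h => by
    simp only [g, (hpred t ω ω' (hpast ω ω' h)).1, crrStock_congr S0 u d (hpast ω ω' h)]
  have hk : ∀ ω ω', (∀ i ≠ t, ω i = ω' i) → k ω = k ω' := fun ω ω' h => by
    simp only [k, (hpred t ω ω' (hpast ω ω' h)).2]
  have hsplit : crrPortfolioValue S0 u d r a b t (t + 1)
      = (fun ω => g ω * (fun x : Bool => if x then 1 + u else 1 + d) (ω t))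
        + (fun ω => k ω * (fun _ => 1 + r) (ω t)) := by
    funext ω
    simp only [crrPortfolioValue, crrStock_succ S0 u d t.isLt, Pi.add_apply, g, k, pow_succ]
    ring
  have hnow : crrPortfolioValue S0 u d r a b t t = g + k := rfl
  rw [hsplit, hnow, piExpect_add, piExpect_add,
    piExpect_mul_apply sum_crrRiskNeutralWeight hg (fun x => if x then 1 + u else 1 + d),
    piExpect_mul_apply sum_crrRiskNeutralWeight hk (fun _ => 1 + r),
    sum_growth_mul_crrRiskNeutralWeight hud, ← mul_sum, sum_crrRiskNeutralWeight]
  ring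

lemma piExpect_crrTerminalWealth (hT : 0 < T) (hud : u ≠ d)
    {a b : Fin T → (Fin T → Bool) → ℝ}
    (hpred : crrPredictable a b) (hsf : crrSelfFinancing S0 u d r a b) :
    piExpect (crrRiskNeutralWeight u d r) (crrTerminalWealth hT S0 u d r a b)
      = (1 + r) ^ T * piExpect (crrRiskNeutralWeight u d r) (crrInitialWealth hT S0 a b) := by
  have hinit : crrInitialWealth hT S0 a b = crrPortfolioValue S0 u d r a b ⟨0, hT⟩ 0 :=
    funext fun ω => by simp [crrInitialWealth, crrPortfolioValue, crrStock_zero]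
  have hgrowth (n : ℕ) (hn : n < T) :
      piExpect (crrRiskNeutralWeight u d r) (crrPortfolioValue S0 u d r a b ⟨n, hn⟩ (n + 1))
        = (1 + r) ^ (n + 1) * piExpect (crrRiskNeutralWeight u d r)
            (crrPortfolioValue S0 u d r a b ⟨0, hT⟩ 0) := by
    induction n with
    | zero => simpa using piExpect_crrPortfolioValue_succ hud hpred ⟨0, hn⟩
    | succ n ih =>
      have hrebalance : crrPortfolioValue S0 u d r a b ⟨n + 1, hn⟩ (n + 1)
          = crrPortfolioValue S0 u d r a b ⟨n, by omega⟩ (n + 1) :=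
        funext fun ω => (hsf n hn ω).symm
      rw [piExpect_crrPortfolioValue_succ hud hpred ⟨n + 1, hn⟩, Fin.val_mk, hrebalance, ih,
        pow_succ _ (n + 1)]
      ring
  have hterminal := hgrowth (T - 1) (by omega)
  rw [Nat.sub_add_cancel hT] at hterminal
  rw [hinit]
  exact hterminal

end Trading

/-- the price of a degenerate digital option paying 1 exactly when the
terminal stock price equals `K = S0*(1+u)^(x₀)*(1+d)^(T-x₀)`. -/
theorem crr_digital_option_price
    (T : ℕ) (hT : 0 < T) (S0 u d r : ℝ) (hS0 : 0 < S0)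
    (hd : -1 < d) (hdr : d < r) (hru : r < u)
    (x₀ : ℕ) (hx₀ : x₀ ≤ T)
    (a b : Fin T → (Fin T → Bool) → ℝ)
    (hpred : crrPredictable a b) (hsf : crrSelfFinancing S0 u d r a b)
    (hterm : ∀ ω, crrTerminalWealth hT S0 u d r a b ω =
      if crrStock T S0 u d T ω = S0 * (1 + u) ^ x₀ * (1 + d) ^ (T - x₀) then 1 else 0) :
    ∀ ω, crrInitialWealth hT S0 a b ω =
      (1 + r) ^ (-(T : ℤ)) * (T.choose x₀ : ℝ)
        * ((r - d) / (u - d)) ^ x₀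
        * (1 - (r - d) / (u - d)) ^ (T - x₀) := by
  intro ω
  have hdu : d < u := hdr.trans hru
  have hpayoff : crrTerminalWealth hT S0 u d r a b = fun ω => if crrUps ω = x₀ then 1 else 0 :=
    funext fun ω => by simp only [hterm, crrStock_terminal_eq_iff S0 u d hS0.ne' hd hdu hx₀]
  have hinit : crrInitialWealth hT S0 a b = fun _ => crrInitialWealth hT S0 a b ω :=
    funext fun ω' => by
      simp only [crrInitialWealth, hpred ⟨0, hT⟩ ω' ω fun i hi => (Nat.not_lt_zero _ hi).elim]
  have hprice := piExpect_crrTerminalWealth hT hdu.ne' hpred hsf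
  rw [hpayoff, piExpect_indicator_crrUps_eq, hinit,
    piExpect_const sum_crrRiskNeutralWeight] at hprice
  rw [zpow_neg, zpow_natCast, mul_assoc, mul_assoc,
    eq_inv_mul_iff_mul_eq₀ (pow_ne_zero T (by linarith)), ← hprice]
  simp [crrRiskNeutralWeight, mul_assoc]
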